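/- arXiv:1601.06396 — 2 statements merged into one kernel-verified Lean document; each statement's English description precedes it below -/
import Mathlib

section
/- Let J₁ ⊂ J be such that sup_{I ∈ J₁} mes(I) < 2π, and let 𝒳 ⊂ ∪_{I ∈ J₁} ℓ₂^{BL}(I) be a set bounded in ℓ₂. Then for every ε > 0 there exists a single real-valued sequence k̂ ∈ ℓ₂({1,2,3,...}) such that for every x ∈ 𝒳, every I ∈ J₁ with x ∈ ℓ₂^{BL}(I), and every t ∈ ℤ, the series x̂(t) = e^{iω_I t} ∑_{s ≤ t−1} k̂(t−s) e^{−iω_I s} x(s) converges absolutely and |x(t) − x̂(t)| ≤ ε. -/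
/-!
Let `a < π` bound the half-lengths of the arcs. The arc `{e^{iφ} : |φ| ≤ a}` misses the ray
`(-∞, 0]`, so moving the pole of `(w - u)⁻¹` from far out on that ray to `0` in steps shorter
than its distance to the arc, each step a geometric series (Runge's argument), shows that `1/w`
is a uniform limit on the arc of polynomials `q` with real coefficients. The coefficients of a
`q` with `|1 - w q(w)| ≤ δ` on the arc form the kernel: for `x ∈ ℓ₂^{BL}(I)` with spectrum `X`,
`x - x̂` is the inverse Z-transform of `X(ω) (1 - W q(W))` with `W = e^{i(ω_I - ω)}`, which is at
most `δ |X|`, and by Parseval `∫ |X|` is bounded uniformly on the bounded set `𝒳`.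
-/

open MeasureTheory Complex Real Set Filter

noncomputable section

/-- Two-sided square-summable sequences: membership in `ℓ₂`. -/
def MemL2 (x : ℤ → ℂ) : Prop := Summable fun t => ‖x t‖ ^ 2

/-- Absolutely summable sequences: membership in `ℓ₁(ℤ)`. -/
def MemL1 (x : ℤ → ℂ) : Prop := Summable fun t => ‖x t‖

/-- Inverse Z-transform of a function on `(−π, π]`:
`x(t) = (1/2π) ∫_{−π}^{π} X(e^{iω}) e^{iωt} dω`. -/
def invZ (X : ℝ → ℂ) (t : ℤ) : ℂ :=
  ((1 / (2 * π) : ℝ) : ℂ) *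
    ∫ ω in Set.Ioc (-π) π, X ω * Complex.exp (Complex.I * (ω : ℂ) * (t : ℂ))

/-- `x ∈ ℓ₂^{BL}(S)`: `x` is square-summable and its Z-transform vanishes a.e. outside `S`,
expressed by saying that `x` is the inverse Z-transform of some `X ∈ L²` of the circle
vanishing a.e. outside `S`. -/
def BandLimited (S : Set ℝ) (x : ℤ → ℂ) : Prop :=
  MemL2 x ∧ ∃ X : ℝ → ℂ,
    MemLp X 2 (volume.restrict (Set.Ioc (-π) π)) ∧
    (∀ᵐ ω ∂volume.restrict (Set.Ioc (-π) π), ω ∉ S → X ω = 0) ∧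
    ∀ t : ℤ, x t = invZ X t

/-- An element of the class `J`: a proper connected arc of the circle, recorded via the
angle `mid` of its middle point and its half-length `halfLen` (so `mes(I) = 2·halfLen`);
`halfLen < π` makes the complementary set nonempty. -/
structure Arc where
  mid : ℝ
  halfLen : ℝ
  mid_mem : mid ∈ Set.Ioc (-π) π
  halfLen_pos : 0 < halfLen
  halfLen_lt : halfLen < π

/-- The subset of `(−π, π]` corresponding to the arc `{e^{iω} : |ω − mid| < halfLen (mod 2π)}`. -/
def Arc.set (I : Arc) : Set ℝ :=
  {ω | ω ∈ Set.Ioc (-π) π ∧ ∃ k : ℤ, |ω - I.mid + 2 * π * (k : ℝ)| < I.halfLen}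

/-- One-sided sequences, defined on `{t ∈ ℤ : t ≤ 0}`. -/
abbrev NegSeq := {t : ℤ // t ≤ 0} → ℂ

/-- Membership in `ℓ₂⁻`. -/
def MemL2Neg (x : NegSeq) : Prop := Summable fun t => ‖x t‖ ^ 2

/-- `x ∈ ℓ₂^{−,LBL}(S)`: `x` is the trace on `{t ≤ 0}` of a band-limited sequence with
spectrum in `S`. -/
def LBL (S : Set ℝ) (x : NegSeq) : Prop :=
  ∃ xBL : ℤ → ℂ, BandLimited S xBL ∧ ∀ t : {t : ℤ // t ≤ 0}, x t = xBL t.1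

/-- `p` is the optimal approximation of `x` in `ℓ₂^{−,LBL}(S)`, i.e. a minimizer of
`∑_{t≤0} |p(t) − x(t)|²` over `ℓ₂^{−,LBL}(S)`. -/
def IsOptApprox (S : Set ℝ) (x p : NegSeq) : Prop :=
  LBL S p ∧ ∀ z : NegSeq, LBL S z →
    (∑' t, ‖p t - x t‖ ^ 2) ≤ ∑' t, ‖z t - x t‖ ^ 2

/-- `sinc(u) = sin(u)/u` (with value `1` at `u = 0`). -/
def sinc (u : ℝ) : ℝ := if u = 0 then 1 else Real.sin u / u

open Polynomial

theorem Subalgebra.tsum_geometric_mem {R A : Type*} [CommSemiring R] [NormedRing A]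
    [CompleteSpace A] [Algebra R A] {S : Subalgebra R A} (hS : IsClosed (S : Set A)) {x : A} (hx : x ∈ S)
    (hx1 : ‖x‖ < 1) : ∑' n, x ^ n ∈ S :=
  hS.mem_of_tendsto (summable_geometric_of_norm_lt_one hx1).hasSum.tendsto_sum_nat
    (Eventually.of_forall fun _ => S.sum_mem fun n _ => S.pow_mem hx n)

section PoleShifting

variable (K : Set ℂ)

def realPolynomialClosure [CompactSpace K] : Subalgebra ℝ C(K, ℂ) :=
  (Algebra.adjoin ℝ {(ContinuousMap.id ℂ).restrict K}).topologicalClosure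

def InvSubApproximable [CompactSpace K] (u : ℝ) : Prop :=
  ∃ g ∈ realPolynomialClosure K,
    g * ((ContinuousMap.id ℂ).restrict K - algebraMap ℝ C(K, ℂ) u) = 1

variable {K}

theorem ContinuousMap.eq_inv_sub_of_mul_sub_eq_one {u : ℝ} {g : C(K, ℂ)}
    (hg : g * ((ContinuousMap.id ℂ).restrict K - algebraMap ℝ C(K, ℂ) u) = 1) (w : K) :
    g w = ((w : ℂ) - u)⁻¹ :=
  eq_inv_of_mul_eq_one_left (by simpa using congrArg (· w) hg)

variable [CompactSpace K]

theorem invSubApproximable_of_norm_lt {u : ℝ} (hu : ‖(ContinuousMap.id ℂ).restrict K‖ < |u|) :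
    InvSubApproximable K u := by
  set ι := (ContinuousMap.id ℂ).restrict K
  have hu0 : u ≠ 0 := by
    rintro rfl
    rw [abs_zero] at hu
    exact (norm_nonneg ι).not_gt hu
  have hx : ‖u⁻¹ • ι‖ < 1 := by
    rw [norm_smul, Real.norm_eq_abs, abs_inv, inv_mul_lt_iff₀ (abs_pos.2 hu0), mul_one]
    exact hu
  have hιS : ι ∈ realPolynomialClosure K :=
    Subalgebra.le_topologicalClosure _ (Algebra.subset_adjoin rfl)
  refine ⟨-u⁻¹ • ∑' n, (u⁻¹ • ι) ^ n, Subalgebra.smul_mem _ (Subalgebra.tsum_geometric_mem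
    (Subalgebra.isClosed_topologicalClosure _) (Subalgebra.smul_mem _ hιS _) hx) _, ?_⟩
  have hgeom := geom_series_mul_neg _ hx
  have hinv : algebraMap ℝ C(K, ℂ) u⁻¹ * algebraMap ℝ C(K, ℂ) u = 1 := by
    rw [← map_mul, inv_mul_cancel₀ hu0, map_one]
  simp only [Algebra.smul_def, map_neg] at hgeom ⊢
  linear_combination hgeom + (∑' n, (algebraMap ℝ C(K, ℂ) u⁻¹ * ι) ^ n) * hinv

/-- `(w - (u + h))⁻¹ = (w - u)⁻¹ ∑ (h (w - u)⁻¹)ⁿ`: the pole can be pushed by less than its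
distance to `K`. -/
theorem InvSubApproximable.add {u h d : ℝ} (hu : InvSubApproximable K u)
    (hdist : ∀ w ∈ K, d ≤ ‖w - u‖) (hh : |h| < d) : InvSubApproximable K (u + h) := by
  obtain ⟨g, hgS, hg⟩ := hu
  have hd : 0 < d := (abs_nonneg h).trans_lt hh
  have hgd : ‖g‖ ≤ d⁻¹ := by
    refine (ContinuousMap.norm_le _ (inv_nonneg.2 hd.le)).2 fun w => ?_
    rw [ContinuousMap.eq_inv_sub_of_mul_sub_eq_one hg w, norm_inv]
    exact inv_anti₀ hd (hdist w w.2)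
  have hx : ‖h • g‖ < 1 := by
    rw [norm_smul, Real.norm_eq_abs]
    calc |h| * ‖g‖ ≤ |h| * d⁻¹ := by gcongr
      _ < 1 := by rwa [← div_eq_mul_inv, div_lt_one hd]
  refine ⟨g * ∑' n, (h • g) ^ n, Subalgebra.mul_mem _ hgS (Subalgebra.tsum_geometric_mem
    (Subalgebra.isClosed_topologicalClosure _) (Subalgebra.smul_mem _ hgS h) hx), ?_⟩
  have hgeom := mul_neg_geom_series _ hx
  simp only [Algebra.smul_def, map_add] at hgeom ⊢
  linear_combination (∑' n, (algebraMap ℝ C(K, ℂ) h * g) ^ n) * hg + hgeom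

theorem InvSubApproximable.of_le {u₀ u₁ d : ℝ} (h₀ : InvSubApproximable K u₀) (hle : u₀ ≤ u₁)
    (hd : 0 < d) (hdist : ∀ w ∈ K, ∀ v ∈ Icc u₀ u₁, d ≤ ‖w - v‖) :
    InvSubApproximable K u₁ := by
  obtain ⟨N, hN⟩ := exists_nat_gt ((u₁ - u₀) / d)
  have hN0 : (0 : ℝ) < N := (div_nonneg (sub_nonneg.2 hle) hd.le).trans_lt hN
  set h := (u₁ - u₀) / N
  have hh0 : 0 ≤ h := div_nonneg (sub_nonneg.2 hle) hN0.le
  have hNh : N * h = u₁ - u₀ := mul_div_cancel₀ _ hN0.ne'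
  have hhd : |h| < d := by
    rw [abs_of_nonneg hh0, div_lt_iff₀ hN0, mul_comm]
    rwa [div_lt_iff₀ hd] at hN
  have hsteps : ∀ m : ℕ, m ≤ N → InvSubApproximable K (u₀ + m * h) := by
    intro m hm
    induction m with
    | zero => simpa using h₀
    | succ m ih =>
      have hmh : (m : ℝ) * h ≤ N * h := by gcongr; exact_mod_cast (Nat.le_succ m).trans hm
      have hstep := (ih ((Nat.le_succ m).trans hm)).add
        (fun w hw => hdist w hw _ ⟨by nlinarith, by linarith⟩) hhd
      convert hstep using 1
      push_cast
      ring
  simpa [hNh] using hsteps N le_rfl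

theorem invSubApproximable_of_forall_le_notMem {u : ℝ} (hu : ∀ v ≤ u, (v : ℂ) ∉ K) :
    InvSubApproximable K u := by
  set r := ‖(ContinuousMap.id ℂ).restrict K‖
  set u₀ := min u (-(r + 1))
  have hu₀ : u₀ ≤ -(r + 1) := min_le_right _ _
  have h₀ : InvSubApproximable K u₀ := invSubApproximable_of_norm_lt (by
    rw [abs_of_neg (by linarith [norm_nonneg ((ContinuousMap.id ℂ).restrict K)])]
    linarith)
  have hdisj : Disjoint K (ofReal '' Icc u₀ u) :=
    Set.disjoint_left.2 fun w hw ⟨v, hv, hvw⟩ => hu v hv.2 (hvw ▸ hw)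
  obtain ⟨d, hd0, hd⟩ := Metric.exists_pos_forall_lt_edist (isCompact_iff_compactSpace.2 ‹_›)
    (isCompact_Icc.image continuous_ofReal).isClosed hdisj
  refine h₀.of_le (min_le_left _ _) (NNReal.coe_pos.2 hd0) fun w hw v hv => ?_
  have hdwv := hd w hw v ⟨v, hv, rfl⟩
  rw [edist_nndist, ENNReal.coe_lt_coe, ← NNReal.coe_lt_coe, coe_nndist, dist_eq_norm] at hdwv
  exact hdwv.le

theorem exists_polynomial_approx_inv_sub {u : ℝ} (hu : ∀ v ≤ u, (v : ℂ) ∉ K) {ε : ℝ}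
    (hε : 0 < ε) : ∃ q : ℝ[X], ∀ w ∈ K, ‖aeval w q - (w - u)⁻¹‖ < ε := by
  obtain ⟨g, hgS, hg⟩ := invSubApproximable_of_forall_le_notMem hu
  rw [realPolynomialClosure, ← SetLike.mem_coe, Subalgebra.topologicalClosure_coe,
    Metric.mem_closure_iff] at hgS
  obtain ⟨_, hp, hgp⟩ := hgS ε hε
  rw [SetLike.mem_coe, Algebra.adjoin_singleton_eq_range_aeval] at hp
  obtain ⟨q, rfl⟩ := hp
  refine ⟨q, fun w hw => ?_⟩
  have heval := aeval_algHom_apply (ContinuousMap.evalAlgHom ℝ ℂ (⟨w, hw⟩ : K))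
    ((ContinuousMap.id ℂ).restrict K) q
  rw [← ContinuousMap.eq_inv_sub_of_mul_sub_eq_one hg ⟨w, hw⟩, ← dist_eq_norm, dist_comm]
  simp only [ContinuousMap.evalAlgHom_apply, ContinuousMap.restrict_apply,
    ContinuousMap.id_apply] at heval
  rw [heval]
  exact (ContinuousMap.dist_apply_le_dist _).trans_lt hgp

end PoleShifting

def circleArc (a : ℝ) : Set ℂ := (fun φ : ℝ => cexp (φ * I)) '' Icc (-a) a

theorem circleArc_mono {a b : ℝ} (hab : a ≤ b) : circleArc a ⊆ circleArc b :=
  image_mono (Icc_subset_Icc (neg_le_neg hab) hab)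

theorem ofReal_notMem_circleArc {a v : ℝ} (ha : a < π) (hv : v ≤ 0) : (v : ℂ) ∉ circleArc a := by
  rintro ⟨φ, ⟨hφa, hφb⟩, hφv⟩
  have him := congrArg Complex.im hφv
  rw [exp_ofReal_mul_I_im, ofReal_im,
    Real.sin_eq_zero_iff_of_lt_of_lt (by linarith) (by linarith)] at him
  subst him
  have h1 : (1 : ℝ) = v := by exact_mod_cast (by simpa using hφv : (1 : ℂ) = v)
  linarith

theorem exists_polynomial_approx_on_circleArc {a ε : ℝ} (ha : a < π) (hε : 0 < ε) :
    ∃ q : ℝ[X], ∀ w ∈ circleArc a, ‖1 - w * aeval w q‖ < ε := by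
  have : CompactSpace (circleArc a) :=
    isCompact_iff_compactSpace.1 (isCompact_Icc.image (by fun_prop))
  obtain ⟨q, hq⟩ := exists_polynomial_approx_inv_sub (u := 0)
    (fun _ hv => ofReal_notMem_circleArc ha hv) hε
  refine ⟨q, fun w hw => ?_⟩
  obtain ⟨φ, -, rfl⟩ := id hw
  have hw0 : cexp (φ * I) ≠ 0 := exp_ne_zero _
  calc ‖1 - cexp (φ * I) * aeval (cexp (φ * I)) q‖
      = ‖cexp (φ * I)‖ * ‖aeval (cexp (φ * I)) q - (cexp (φ * I) - (0 : ℝ))⁻¹‖ := by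
        rw [← norm_mul, ofReal_zero, sub_zero, mul_sub, mul_inv_cancel₀ hw0, norm_sub_rev]
    _ < ε := by rw [norm_exp_ofReal_mul_I, one_mul]; exact hq _ hw

theorem Arc.exp_mem_circleArc (J : Arc) {ω : ℝ} (hω : ω ∈ J.set) :
    cexp ((J.mid - ω : ℝ) * I) ∈ circleArc J.halfLen := by
  obtain ⟨-, k, hk⟩ := hω
  obtain ⟨hk₁, hk₂⟩ := abs_lt.1 hk
  refine ⟨J.mid - ω - 2 * π * k, ⟨by linarith, by linarith⟩, exp_eq_exp_iff_exists_int.2 ⟨-k, ?_⟩⟩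
  push_cast
  ring

section InverseZTransform

variable {X Y : ℝ → ℂ}

theorem norm_exp_I_mul_ofReal_mul_intCast (ω : ℝ) (t : ℤ) : ‖cexp (I * ω * t)‖ = 1 := by
  rw [show I * ω * t = ((ω * t : ℝ) : ℂ) * I by push_cast; ring, norm_exp_ofReal_mul_I]

theorem norm_invZ_le (Y : ℝ → ℂ) (t : ℤ) :
    ‖invZ Y t‖ ≤ (2 * π)⁻¹ * ∫ ω in Ioc (-π) π, ‖Y ω‖ := by
  rw [invZ, norm_mul, norm_real, Real.norm_of_nonneg (by positivity), one_div]
  gcongr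
  refine (norm_integral_le_integral_norm _).trans_eq (integral_congr_ae (ae_of_all _ fun ω => ?_))
  simp only [norm_mul, norm_exp_I_mul_ofReal_mul_intCast, mul_one]

theorem invZ_eq_fourierCoeffOn (X : ℝ → ℂ) (t : ℤ) :
    invZ X t = fourierCoeffOn (neg_lt_self pi_pos) X (-t) := by
  rw [fourierCoeffOn_eq_integral, invZ, intervalIntegral.integral_of_le (neg_le_self pi_pos.le),
    real_smul, sub_neg_eq_add, ← two_mul, neg_neg]
  congr 1
  refine setIntegral_congr_fun measurableSet_Ioc fun ω _ => ?_
  rw [fourier_coe_apply, smul_eq_mul, mul_comm]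
  congr 2
  field_simp
  push_cast
  ring

theorem hasSum_norm_invZ_sq (hX : MemLp X 2 (volume.restrict (Ioc (-π) π))) :
    HasSum (fun t => ‖invZ X t‖ ^ 2) ((2 * π)⁻¹ * ∫ ω in Ioc (-π) π, ‖X ω‖ ^ 2) := by
  have h := hasSum_sq_fourierCoeffOn (neg_lt_self pi_pos) hX
  rw [← (Equiv.neg ℤ).hasSum_iff, sub_neg_eq_add, ← two_mul, smul_eq_mul,
    intervalIntegral.integral_of_le (neg_le_self pi_pos.le)] at h
  simpa only [invZ_eq_fourierCoeffOn, Function.comp_def, Equiv.neg_apply] using h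

theorem norm_invZ_le_of_norm_le_mul (hX : MemLp X 2 (volume.restrict (Ioc (-π) π))) {δ : ℝ}
    (hδ : 0 ≤ δ) (hY : ∀ᵐ ω ∂volume.restrict (Ioc (-π) π), ‖Y ω‖ ≤ δ * ‖X ω‖) (t : ℤ) :
    ‖invZ Y t‖ ≤ δ / 2 * (∑' s, ‖invZ X s‖ ^ 2 + 1) := by
  have hX2 : IntegrableOn (fun ω => ‖X ω‖ ^ 2) (Ioc (-π) π) := hX.integrable_norm_pow two_ne_zero
  have hint : ∫ ω in Ioc (-π) π, ‖Y ω‖ ≤ ∫ ω in Ioc (-π) π, δ / 2 * (‖X ω‖ ^ 2 + 1) := by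
    refine integral_mono_of_nonneg (ae_of_all _ fun _ => norm_nonneg _)
      ((hX2.add (integrable_const 1)).const_mul _) (hY.mono fun ω hω => ?_)
    nlinarith [two_mul_le_add_sq ‖X ω‖ 1]
  rw [integral_const_mul, integral_add hX2 (integrable_const 1), setIntegral_const,
    Real.volume_real_Ioc_of_le (neg_le_self pi_pos.le), smul_eq_mul, mul_one] at hint
  rw [(hasSum_norm_invZ_sq hX).tsum_eq]
  calc ‖invZ Y t‖ ≤ (2 * π)⁻¹ * ∫ ω in Ioc (-π) π, ‖Y ω‖ := norm_invZ_le Y t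
    _ ≤ (2 * π)⁻¹ * (δ / 2 * ((∫ ω in Ioc (-π) π, ‖X ω‖ ^ 2) + (π - -π))) := by gcongr
    _ = _ := by field_simp; ring

theorem MeasureTheory.IntegrableOn.mul_continuous_Ioc (hX : IntegrableOn X (Ioc (-π) π))
    {f : ℝ → ℂ} (hf : Continuous f) : IntegrableOn (fun ω => X ω * f ω) (Ioc (-π) π) :=
  hX.mul_continuousOn_of_subset hf.continuousOn measurableSet_Ioc isCompact_Icc Ioc_subset_Icc_self

theorem invZ_sub (hX : IntegrableOn X (Ioc (-π) π)) (hY : IntegrableOn Y (Ioc (-π) π)) (t : ℤ) :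
    invZ X t - invZ Y t = invZ (fun ω => X ω - Y ω) t := by
  rw [invZ, invZ, invZ, ← mul_sub, ← integral_sub (hX.mul_continuous_Ioc (by fun_prop))
    (hY.mul_continuous_Ioc (by fun_prop))]
  simp only [sub_mul]

theorem invZ_finset_sum {ι : Type*} (s : Finset ι) {X : ι → ℝ → ℂ}
    (hX : ∀ i ∈ s, IntegrableOn (X i) (Ioc (-π) π)) (t : ℤ) :
    invZ (fun ω => ∑ i ∈ s, X i ω) t = ∑ i ∈ s, invZ (X i) t := by
  simp only [invZ, Finset.sum_mul, ← Finset.mul_sum]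
  rw [integral_finsetSum _ fun i hi => (hX i hi).mul_continuous_Ioc (by fun_prop)]

/-- The estimate `x̂(t)`, with `k n` standing for `k̂(n + 1)`. -/
def causalEstimate (k : ℕ → ℝ) (m : ℝ) (x : ℤ → ℂ) (t : ℤ) : ℂ :=
  cexp (I * m * t) * ∑' n : ℕ, (k n : ℂ) * cexp (-I * m * ((t - 1 - n : ℤ) : ℂ)) * x (t - 1 - n)

theorem causalEstimate_coeff_invZ (hX : IntegrableOn X (Ioc (-π) π)) (q : ℝ[X]) (m : ℝ)
    (t : ℤ) : causalEstimate (fun n => q.coeff n) m (invZ X) t =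
      invZ (fun ω => X ω * (cexp ((m - ω : ℝ) * I) * aeval (cexp ((m - ω : ℝ) * I)) q)) t := by
  have hterm : ∀ n : ℕ, cexp (I * m * t) *
      ((q.coeff n : ℂ) * cexp (-I * m * ((t - 1 - n : ℤ) : ℂ)) * invZ X (t - 1 - n)) =
      invZ (fun ω => X ω * (cexp ((m - ω : ℝ) * I) *
        (q.coeff n • cexp ((m - ω : ℝ) * I) ^ n))) t := by
    intro n
    have hexp : ∀ ω : ℝ, cexp ((m - ω : ℝ) * I) * cexp ((m - ω : ℝ) * I) ^ n * cexp (I * ω * t) =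
        cexp (I * m * t) * cexp (-I * m * ((t - 1 - n : ℤ) : ℂ)) *
          cexp (I * ω * ((t - 1 - n : ℤ) : ℂ)) := by
      intro ω
      rw [← pow_succ', ← Complex.exp_nat_mul, ← Complex.exp_add, ← Complex.exp_add,
        ← Complex.exp_add]
      congr 1
      push_cast
      ring
    have hintegrand : (fun ω : ℝ => X ω * (cexp ((m - ω : ℝ) * I) *
        (q.coeff n * cexp ((m - ω : ℝ) * I) ^ n)) * cexp (I * ω * t)) =
        fun ω => cexp (I * m * t) * q.coeff n * cexp (-I * m * ((t - 1 - n : ℤ) : ℂ)) *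
          (X ω * cexp (I * ω * ((t - 1 - n : ℤ) : ℂ))) :=
      funext fun ω => by linear_combination (q.coeff n : ℂ) * X ω * hexp ω
    simp only [invZ, real_smul]
    rw [hintegrand, integral_const_mul]
    ring
  rw [causalEstimate, tsum_eq_sum (s := Finset.range (q.natDegree + 1)) fun n hn => by
    rw [q.coeff_eq_zero_of_natDegree_lt (by simpa using hn)]; simp]
  simp only [aeval_eq_sum_range, Finset.mul_sum, hterm]
  rw [invZ_finset_sum _ fun n _ => hX.mul_continuous_Ioc (by fun_prop)]

theorem invZ_sub_causalEstimate (hX : IntegrableOn X (Ioc (-π) π)) (q : ℝ[X]) (m : ℝ) (t : ℤ) :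
    invZ X t - causalEstimate (fun n => q.coeff n) m (invZ X) t =
      invZ (fun ω => X ω * (1 - cexp ((m - ω : ℝ) * I) * aeval (cexp ((m - ω : ℝ) * I)) q)) t := by
  rw [causalEstimate_coeff_invZ hX, invZ_sub hX (hX.mul_continuous_Ioc (by fun_prop))]
  simp only [mul_sub, mul_one]

end InverseZTransform

theorem stmt_1_general (𝒥 : Set Arc) (c : ℝ) (hc : c < 2 * π)
    (hmes : ∀ I ∈ 𝒥, 2 * I.halfLen ≤ c)
    (𝒳 : Set (ℤ → ℂ))
    (C : ℝ) (hbdd : ∀ x ∈ 𝒳, ∑' t : ℤ, ‖x t‖ ^ 2 ≤ C)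
    (ε : ℝ) (hε : 0 < ε) :
    ∃ k : ℕ → ℝ, Summable (fun n => (k n) ^ 2) ∧
      ∀ x ∈ 𝒳, ∀ I ∈ 𝒥, BandLimited I.set x → ∀ t : ℤ,
        Summable (fun n : ℕ =>
          ‖((k n : ℝ) : ℂ) * Complex.exp (-Complex.I * (I.mid : ℂ) * ((t - 1 - (n : ℤ) : ℤ) : ℂ))
              * x (t - 1 - (n : ℤ))‖) ∧
        ‖x t - Complex.exp (Complex.I * (I.mid : ℂ) * (t : ℂ)) *
            ∑' n : ℕ, ((k n : ℝ) : ℂ)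
              * Complex.exp (-Complex.I * (I.mid : ℂ) * ((t - 1 - (n : ℤ) : ℤ) : ℂ))
              * x (t - 1 - (n : ℤ))‖ ≤ ε := by
  set δ := ε / (|C| + 1)
  have hδ : 0 < δ := by positivity
  obtain ⟨q, hq⟩ := exists_polynomial_approx_on_circleArc (a := c / 2) (by linarith) hδ
  have hfin : ∀ n ∉ q.support, q.coeff n = 0 := fun _ => notMem_support_iff.1
  refine ⟨fun n => q.coeff n,
    summable_of_ne_finset_zero (s := q.support) fun n hn => by simp [hfin n hn], ?_⟩
  rintro x hx I hI ⟨-, X, hX, hXout, hXx⟩ t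
  obtain rfl : x = invZ X := funext hXx
  refine ⟨summable_of_ne_finset_zero (s := q.support) fun n hn => by simp [hfin n hn], ?_⟩
  change ‖invZ X t - causalEstimate (fun n => q.coeff n) I.mid (invZ X) t‖ ≤ ε
  rw [invZ_sub_causalEstimate (hX.integrable one_le_two)]
  refine (norm_invZ_le_of_norm_le_mul hX hδ.le (hXout.mono fun ω hω => ?_) t).trans ?_
  · by_cases hωI : ω ∈ I.set
    · rw [norm_mul, mul_comm]
      gcongr
      exact (hq _ (circleArc_mono (by linarith [hmes I hI]) (I.exp_mem_circleArc hωI))).le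
    · simp [hω hωI]
  · have hC : ∑' s, ‖invZ X s‖ ^ 2 ≤ |C| := (hbdd _ hx).trans (le_abs_self C)
    calc δ / 2 * (∑' s, ‖invZ X s‖ ^ 2 + 1) ≤ δ / 2 * (|C| + 1) := by gcongr
      _ = ε / 2 := by simp only [δ]; field_simp
      _ ≤ ε := by linarith

/-- a single kernel `k̂ ∈ ℓ₂({1,2,...})` (here `k n` stands for `k̂(n+1)`) serves all
`x` in a bounded set `𝒳 ⊂ ∪_{I ∈ 𝒥₁} ℓ₂^{BL}(I)`, where `sup_{I ∈ 𝒥₁} mes(I) < 2π`: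
for every `x ∈ 𝒳`, every `I ∈ 𝒥₁` with `x ∈ ℓ₂^{BL}(I)` and every `t ∈ ℤ`, the series
`x̂(t) = e^{iω_I t} ∑_{s ≤ t−1} k̂(t−s) e^{−iω_I s} x(s)` (with `s = t−1−n`)
converges absolutely and `|x(t) − x̂(t)| ≤ ε`. -/
theorem stmt_1 (𝒥 : Set Arc) (c : ℝ) (hc : c < 2 * π)
    (hmes : ∀ I ∈ 𝒥, 2 * I.halfLen ≤ c)
    (𝒳 : Set (ℤ → ℂ)) (hBL : ∀ x ∈ 𝒳, ∃ I ∈ 𝒥, BandLimited I.set x)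
    (C : ℝ) (hbdd : ∀ x ∈ 𝒳, ∑' t : ℤ, ‖x t‖ ^ 2 ≤ C)
    (ε : ℝ) (hε : 0 < ε) :
    ∃ k : ℕ → ℝ, Summable (fun n => (k n) ^ 2) ∧
      ∀ x ∈ 𝒳, ∀ I ∈ 𝒥, BandLimited I.set x → ∀ t : ℤ,
        Summable (fun n : ℕ =>
          ‖((k n : ℝ) : ℂ) * Complex.exp (-Complex.I * (I.mid : ℂ) * ((t - 1 - (n : ℤ) : ℤ) : ℂ))
              * x (t - 1 - (n : ℤ))‖) ∧
        ‖x t - Complex.exp (Complex.I * (I.mid : ℂ) * (t : ℂ)) *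
            ∑' n : ℕ, ((k n : ℝ) : ℂ)
              * Complex.exp (-Complex.I * (I.mid : ℂ) * ((t - 1 - (n : ℤ) : ℤ) : ℂ))
              * x (t - 1 - (n : ℤ))‖ ≤ ε :=
  stmt_1_general 𝒥 c hc hmes 𝒳 C hbdd ε hε
end
end

section
/- Fix ω₀ ∈ (−π,π], σ ≥ 0 and m ∈ ℤ. Define the estimator x̂(m) = −e^{imω₀} ∑_{k∈ℤ, k≠m} e^{−iω₀ k} x(k) (the sum converging absolutely for x ∈ ℓ₁(ℤ)). Then |x̂(m) − x(m)| = σ for every x ∈ X_σ; in particular sup_{x ∈ X_σ} |x̂(m) − x(m)| = σ, so this estimator attains the minimal possible worst-case recovery error over X_σ. -/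
open MeasureTheory Complex Real Set Filter

noncomputable section

/-- The Z-transform of an `ℓ₁` sequence, as a (continuous) function of `ω`:
`X(e^{iω}) = ∑_{t∈ℤ} x(t) e^{−iωt}`. -/
def ZT (x : ℤ → ℂ) (ω : ℝ) : ℂ := ∑' t : ℤ, x t * Complex.exp (-Complex.I * (ω : ℂ) * (t : ℂ))

/-- The class `X_σ`: sequences `x ∈ ℓ₁(ℤ)` with `min_{ω∈(−π,π]} |X(e^{iω})| = |X(e^{iω₀})| = σ`. -/
def Xsigma (ω₀ σ : ℝ) : Set (ℤ → ℂ) :=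
  {x | MemL1 x ∧ (∀ ω ∈ Set.Ioc (-π) π, σ ≤ ‖ZT x ω‖) ∧ ‖ZT x ω₀‖ = σ}

/-! The estimator is built so that `x̂(m) − x(m) = −e^{imω₀} X(e^{iω₀})`: the sum over `k ≠ m`
together with the missing term `e^{−iω₀m} x(m)` is exactly the Z-transform at `ω₀`, so the error
is `|X(e^{iω₀})| = σ`. Conversely, `σ δ_m` and `−σ δ_m` both lie in `X_σ` (their Z-transforms have
constant modulus `σ`), agree off `m` and differ by `2σ` at `m`, so every estimator errs by at
least `σ` on one of them. -/

lemma Summable.tsum_eq_add_tsum_ne {β E : Type*} [AddCommGroup E] [UniformSpace E]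
    [IsUniformAddGroup E] [CompleteSpace E] [T2Space E] {f : β → E} (hf : Summable f) (b : β) :
    ∑' k, f k = f b + ∑' k : {k : β // k ≠ b}, f k.1 := by
  rw [← (hf.subtype (· ∈ ({b} : Set β))).tsum_add_tsum_compl (hf.subtype _), tsum_singleton b f]
  rfl

lemma norm_exp_neg_I_mul (ω : ℝ) (t : ℤ) : ‖Complex.exp (-Complex.I * (ω : ℂ) * (t : ℂ))‖ = 1 := by
  simp [Complex.norm_exp]

lemma norm_exp_I_mul (ω : ℝ) (t : ℤ) : ‖Complex.exp (Complex.I * (ω : ℂ) * (t : ℂ))‖ = 1 := by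
  simp [Complex.norm_exp]

/-- The estimator `x̂(m)`, evaluated on the observed values `y = x|_{ℤ∖{m}}`. -/
def lineEstimator (ω₀ : ℝ) (m : ℤ) (y : {k : ℤ // k ≠ m} → ℂ) : ℂ :=
  -Complex.exp (Complex.I * (ω₀ : ℂ) * (m : ℂ)) *
    ∑' k : {k : ℤ // k ≠ m}, Complex.exp (-Complex.I * (ω₀ : ℂ) * (k.1 : ℂ)) * y k

section ZTransform

variable {x : ℤ → ℂ}

lemma MemL1.summable_norm_exp_mul (hx : MemL1 x) (ω : ℝ) :
    Summable fun k : ℤ => ‖Complex.exp (-Complex.I * (ω : ℂ) * (k : ℂ)) * x k‖ := by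
  simp only [norm_mul, norm_exp_neg_I_mul, one_mul]
  exact hx

lemma MemL1.ZT_eq_add_tsum_ne (hx : MemL1 x) (ω : ℝ) (m : ℤ) :
    ZT x ω = Complex.exp (-Complex.I * (ω : ℂ) * (m : ℂ)) * x m +
      ∑' k : {k : ℤ // k ≠ m}, Complex.exp (-Complex.I * (ω : ℂ) * (k.1 : ℂ)) * x k.1 := by
  rw [ZT, tsum_congr fun k => mul_comm (x k) _]
  exact (hx.summable_norm_exp_mul ω).of_norm.tsum_eq_add_tsum_ne m

lemma MemL1.norm_lineEstimator_sub (hx : MemL1 x) (ω₀ : ℝ) (m : ℤ) :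
    ‖lineEstimator ω₀ m (fun k => x k.1) - x m‖ = ‖ZT x ω₀‖ := by
  have hcancel : Complex.exp (Complex.I * (ω₀ : ℂ) * (m : ℂ)) *
      Complex.exp (-Complex.I * (ω₀ : ℂ) * (m : ℂ)) = 1 := by
    rw [← Complex.exp_add]; ring_nf; exact Complex.exp_zero
  have herr : lineEstimator ω₀ m (fun k => x k.1) - x m =
      -Complex.exp (Complex.I * (ω₀ : ℂ) * (m : ℂ)) * ZT x ω₀ := by
    rw [lineEstimator, hx.ZT_eq_add_tsum_ne ω₀ m]
    linear_combination x m * hcancel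
  rw [herr, norm_mul, norm_neg, norm_exp_I_mul, one_mul]

end ZTransform

lemma ZT_single (m : ℤ) (a : ℂ) (ω : ℝ) :
    ZT (Pi.single m a) ω = a * Complex.exp (-Complex.I * (ω : ℂ) * (m : ℂ)) := by
  rw [ZT, tsum_eq_single m fun t ht => by simp [ht]]
  simp

lemma memL1_single (m : ℤ) (a : ℂ) : MemL1 (Pi.single m a) :=
  (hasSum_single m fun t ht => by simp [ht]).summable

lemma single_mem_Xsigma (ω₀ : ℝ) {σ : ℝ} (m : ℤ) {a : ℂ} (ha : ‖a‖ = σ) :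
    Pi.single m a ∈ Xsigma ω₀ σ := by
  have hnorm (ω : ℝ) : ‖ZT (Pi.single m a) ω‖ = σ := by
    rw [ZT_single, norm_mul, norm_exp_neg_I_mul, mul_one, ha]
  exact ⟨memL1_single m a, fun ω _ => (hnorm ω).ge, hnorm ω₀⟩

lemma norm_sub_le_two_mul_of_restrict_eq {ι E : Type*} [SeminormedAddCommGroup E] {m : ι}
    (F : ({t : ι // t ≠ m} → E) → E) {x y : ι → E} {c : ℝ}
    (hxy : (fun t : {t : ι // t ≠ m} => x t.1) = fun t => y t.1)
    (hx : ‖F (fun t => x t.1) - x m‖ ≤ c) (hy : ‖F (fun t => y t.1) - y m‖ ≤ c) :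
    ‖x m - y m‖ ≤ 2 * c := by
  rw [hxy] at hx
  calc ‖x m - y m‖ ≤ ‖x m - F (fun t => y t.1)‖ + ‖F (fun t => y t.1) - y m‖ :=
        norm_sub_le_norm_sub_add_norm_sub _ _ _
    _ ≤ c + c := add_le_add (norm_sub_rev (x m) _ ▸ hx) hy
    _ = 2 * c := by ring

lemma le_of_forall_Xsigma_norm_sub_le (ω₀ : ℝ) {σ : ℝ} (hσ : 0 ≤ σ) (m : ℤ)
    (F : ({t : ℤ // t ≠ m} → ℂ) → ℂ) {c : ℝ}
    (hc : ∀ x ∈ Xsigma ω₀ σ, ‖F (fun t => x t.1) - x m‖ ≤ c) : σ ≤ c := by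
  have hnorm : ‖(σ : ℂ)‖ = σ := by rw [Complex.norm_real, Real.norm_of_nonneg hσ]
  have hagree : (fun t : {t : ℤ // t ≠ m} => (Pi.single m (σ : ℂ) : ℤ → ℂ) t.1) =
      fun t => (Pi.single m (-σ : ℂ) : ℤ → ℂ) t.1 := by
    funext t; simp [t.2]
  have h := norm_sub_le_two_mul_of_restrict_eq F hagree
    (hc _ (single_mem_Xsigma ω₀ m hnorm)) (hc _ (single_mem_Xsigma ω₀ m (by rwa [norm_neg])))
  have h2σ : ‖(Pi.single m (σ : ℂ) : ℤ → ℂ) m - (Pi.single m (-σ : ℂ) : ℤ → ℂ) m‖ = 2 * σ := by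
    rw [Pi.single_eq_same, Pi.single_eq_same, sub_neg_eq_add, ← two_mul, norm_mul, hnorm]
    norm_num
  linarith

theorem stmt_5_general (ω₀ : ℝ) (σ : ℝ) (hσ : 0 ≤ σ) (m : ℤ) :
    (∀ x ∈ Xsigma ω₀ σ,
      Summable (fun k : {k : ℤ // k ≠ m} =>
        ‖Complex.exp (-Complex.I * (ω₀ : ℂ) * (k.1 : ℂ)) * x k.1‖) ∧
      ‖(-Complex.exp (Complex.I * (ω₀ : ℂ) * (m : ℂ))) *
          (∑' k : {k : ℤ // k ≠ m}, Complex.exp (-Complex.I * (ω₀ : ℂ) * (k.1 : ℂ)) * x k.1)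
        - x m‖ = σ) ∧
    ∀ (F : ({t : ℤ // t ≠ m} → ℂ) → ℂ) (c : ℝ),
      (∀ x ∈ Xsigma ω₀ σ, ‖F (fun t => x t.1) - x m‖ ≤ c) → σ ≤ c := by
  exact ⟨fun x ⟨hL1, _, hσ₀⟩ => ⟨(hL1.summable_norm_exp_mul ω₀).subtype _,
      (hL1.norm_lineEstimator_sub ω₀ m).trans hσ₀⟩,
    fun F c hc => le_of_forall_Xsigma_norm_sub_le ω₀ hσ m F hc⟩

/-- the estimator `x̂(m) = −e^{imω₀} ∑_{k≠m} e^{−iω₀k} x(k)` (an absolutely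
convergent series for `x ∈ ℓ₁`) satisfies `|x̂(m) − x(m)| = σ` for every `x ∈ X_σ`; and it attains
the minimal possible worst-case recovery error over `X_σ`: every other estimator's worst-case
error is at least `σ`. -/
theorem stmt_5 (ω₀ : ℝ) (hω₀ : ω₀ ∈ Set.Ioc (-π) π) (σ : ℝ) (hσ : 0 ≤ σ) (m : ℤ) :
    (∀ x ∈ Xsigma ω₀ σ,
      Summable (fun k : {k : ℤ // k ≠ m} =>
        ‖Complex.exp (-Complex.I * (ω₀ : ℂ) * (k.1 : ℂ)) * x k.1‖) ∧
      ‖(-Complex.exp (Complex.I * (ω₀ : ℂ) * (m : ℂ))) *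
          (∑' k : {k : ℤ // k ≠ m}, Complex.exp (-Complex.I * (ω₀ : ℂ) * (k.1 : ℂ)) * x k.1)
        - x m‖ = σ) ∧
    ∀ (F : ({t : ℤ // t ≠ m} → ℂ) → ℂ) (c : ℝ),
      (∀ x ∈ Xsigma ω₀ σ, ‖F (fun t => x t.1) - x m‖ ≤ c) → σ ≤ c :=
  stmt_5_general ω₀ σ hσ m
end
end
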